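/- Let H₀ be a graph on n₀ vertices, s ≥ 1 an integer, and let H₀[s] denote the balanced blowup of H₀ with each vertex replaced by s copies. If H₀ has fewer than δ·n₀³ triangles, then H₀[s] has fewer than δ·(s·n₀)³ triangles; and if at least ε·n₀² edges must be deleted from H₀ to make it triangle-free, then at least ε·(s·n₀)² edges must be deleted from H₀[s] to make it triangle-free. -/

import Mathlib

/-!
Projecting `(v, i) ↦ v` maps each triangle of `H₀[s]` onto a triangle of `H₀`, and a triangle of
`H₀` has at most `s³` lifts, one for each choice of copies of its three vertices.

For the deletion bound, every `σ : V₀ → Fin s` gives a copy `v ↦ (v, σ v)` of `H₀` inside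
`H₀[s]`. If `E` makes `H₀[s]` triangle-free, the edges of `E` on that copy make `H₀` triangle-free,
so there are at least `ε n₀²` of them. An edge of `H₀[s]` lies on exactly `s^(n₀-2)` of the
`s^n₀` copies, so averaging over `σ` gives `|E| ≥ s² ε n₀²`.
-/

open Finset SimpleGraph
open scoped Classical

/-- The balanced blowup of a graph, replacing every vertex by `s` copies. -/
def graphBlowup {V : Type*} (H : SimpleGraph V) (s : ℕ) : SimpleGraph (V × Fin s) where
  Adj a b := H.Adj a.1 b.1
  symm := ⟨fun _ _ h => H.adj_symm h⟩
  loopless := ⟨fun _ h => H.irrefl h⟩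

theorem Finset.exists_image_eq_of_injOn_fst {α β : Type*} [DecidableEq α] [DecidableEq β]
    {T : Finset (α × β)} (hT : Set.InjOn Prod.fst (T : Set (α × β))) :
    ∃ g : T.image Prod.fst → β, univ.image (fun v => (v.1, g v)) = T := by
  choose x hxT hx using fun v : T.image Prod.fst => mem_image.1 v.2
  have hxv : ∀ v : T.image Prod.fst, ((v : α), (x v).2) = x v := fun v => Prod.ext (hx v).symm rfl
  refine ⟨fun v => (x v).2, ext fun y => ?_⟩
  simp only [mem_image, mem_univ, true_and, hxv]
  exact ⟨by rintro ⟨v, rfl⟩; exact hxT v,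
    fun hy => ⟨⟨y.1, mem_image_of_mem _ hy⟩, hT (hxT _) hy (hx _)⟩⟩

theorem Finset.card_filter_image_fst_eq_le {α β : Type*} [DecidableEq α] [Fintype β]
    [DecidableEq β] (𝒯 : Finset (Finset (α × β)))
    (h𝒯 : ∀ T ∈ 𝒯, Set.InjOn Prod.fst (T : Set (α × β))) (S : Finset α) :
    #{T ∈ 𝒯 | T.image Prod.fst = S} ≤ Fintype.card β ^ #S := by
  calc #{T ∈ 𝒯 | T.image Prod.fst = S}
      ≤ #((univ : Finset (S → β)).image fun g => univ.image fun v => (v.1, g v)) := by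
        refine card_le_card fun T hT => ?_
        obtain ⟨hT𝒯, rfl⟩ := mem_filter.1 hT
        obtain ⟨g, hg⟩ := exists_image_eq_of_injOn_fst (h𝒯 T hT𝒯)
        exact mem_image.2 ⟨g, mem_univ _, hg⟩
    _ ≤ Fintype.card β ^ #S := by
        simpa using card_image_le (s := (univ : Finset (S → β)))

theorem Fintype.card_filter_apply_eq_and_apply_eq_mul {α β : Type*} [Fintype α] [DecidableEq α]
    [Fintype β] [DecidableEq β] {a b : α} (hab : a ≠ b) (i j : β) :
    #{σ : α → β | σ a = i ∧ σ b = j} * card β ^ 2 = card β ^ card α := by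
  have hpi : ({σ : α → β | σ a = i ∧ σ b = j} : Finset _) =
      piFinset (Function.update (Function.update (fun _ => (univ : Finset β)) a {i}) b {j}) := by
    ext σ
    simp only [mem_filter, mem_univ, true_and, mem_piFinset, Function.update_apply]
    grind
  have hcard : (fun v => #(Function.update (Function.update (fun _ => (univ : Finset β)) a {i})
      b {j} v)) = Function.update (Function.update (fun _ => card β) a 1) b 1 := by
    funext v
    simp only [Function.update_apply]
    split_ifs <;> simp
  have ha : a ∈ univ \ {b} := by simpa using hab
  have := one_lt_card_iff.2 ⟨a, b, hab⟩
  rw [hpi, card_piFinset, hcard, prod_update_of_mem (mem_univ b), prod_update_of_mem ha,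
    prod_const, one_mul, one_mul, ← pow_add, card_sdiff_of_subset (by simpa using ha),
    card_sdiff_of_subset (by simp), card_singleton, card_singleton, card_univ]
  congr 1
  omega

namespace SimpleGraph

variable {α β : Type*} {G : SimpleGraph α} {H : SimpleGraph β}

theorem IsClique.injOn_hom {T : Set α} (hT : G.IsClique T) (φ : G →g H) : Set.InjOn φ T :=
  fun _ hx _ hy hφ => by_contra fun hne => H.ne_of_adj (φ.map_rel (hT hx hy hne)) hφ

theorem IsNClique.image_hom [DecidableEq β] {k : ℕ} {T : Finset α} (hT : G.IsNClique k T)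
    (φ : G →g H) : H.IsNClique k (T.image φ) where
  isClique := by
    rw [coe_image, IsClique, (hT.isClique.injOn_hom φ).pairwise_image]
    exact fun x hx y hy hne => φ.map_rel (hT.isClique hx hy hne)
  card_eq := by rw [card_image_of_injOn (hT.isClique.injOn_hom φ), hT.card_eq]

end SimpleGraph

section Blowup

variable {V : Type*} {H : SimpleGraph V} {s : ℕ}

def graphBlowup.fstHom (H : SimpleGraph V) (s : ℕ) : graphBlowup H s →g H :=
  ⟨Prod.fst, id⟩

theorem card_cliqueFinset_graphBlowup_le [Fintype V] [DecidableEq V] [DecidableRel H.Adj]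
    [DecidableRel (graphBlowup H s).Adj] (k : ℕ) :
    #((graphBlowup H s).cliqueFinset k) ≤ #(H.cliqueFinset k) * s ^ k := by
  rw [mul_comm]
  refine card_le_mul_card_image_of_maps_to (t := H.cliqueFinset k) (f := image Prod.fst)
    (fun T hT => mem_cliqueFinset_iff.2 ((mem_cliqueFinset_iff.1 hT).image_hom
      (graphBlowup.fstHom H s))) _ fun S hS => ?_
  simpa [(mem_cliqueFinset_iff.1 hS).card_eq] using card_filter_image_fst_eq_le _
    (fun T hT => (mem_cliqueFinset_iff.1 hT).isClique.injOn_hom (graphBlowup.fstHom H s)) S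

variable [Fintype V] [DecidableEq V]

/-- The edges of `E` on the copy `v ↦ (v, σ v)` of `H`, projected back to `H`. -/
def pullbackEdges (E : Finset (Sym2 (V × Fin s))) (σ : V → Fin s) : Finset (Sym2 V) :=
  {f ∈ E | ∀ x ∈ f, σ x.1 = x.2}.image (Sym2.map Prod.fst)

variable {E : Finset (Sym2 (V × Fin s))}

theorem card_pullbackEdges_le (σ : V → Fin s) :
    #(pullbackEdges E σ) ≤ #{f ∈ E | ∀ x ∈ f, σ x.1 = x.2} :=
  card_image_le

theorem cliqueFree_deleteEdges_pullbackEdges {k : ℕ} (σ : V → Fin s)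
    (hE : ((graphBlowup H s).deleteEdges ↑E).CliqueFree k) :
    (H.deleteEdges ↑(pullbackEdges E σ)).CliqueFree k := by
  refine hE.comap ⟨⟨⟨fun v => (v, σ v), fun {u v} huv => ?_⟩, fun u v h => congrArg Prod.fst h⟩⟩
  rw [deleteEdges_adj] at huv ⊢
  exact ⟨huv.1, fun hmem => huv.2 (mem_image.2 ⟨_, mem_filter.2 ⟨hmem, by simp⟩, rfl⟩)⟩

theorem card_filter_forall_mem_apply_fst_eq_snd_mul {f : Sym2 (V × Fin s)}
    (hf : f ∈ (graphBlowup H s).edgeSet) :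
    #{σ : V → Fin s | ∀ x ∈ f, σ x.1 = x.2} * s ^ 2 = s ^ Fintype.card V := by
  induction f using Sym2.ind with
  | h x y =>
    simpa [Sym2.forall_mem_pair] using
      Fintype.card_filter_apply_eq_and_apply_eq_mul (H.ne_of_adj hf) x.2 y.2

theorem sum_card_pullbackEdges_mul_le (hE : ↑E ⊆ (graphBlowup H s).edgeSet) :
    ∑ σ : V → Fin s, #(pullbackEdges E σ) * s ^ 2 ≤ ∑ _σ : V → Fin s, #E := by
  calc ∑ σ : V → Fin s, #(pullbackEdges E σ) * s ^ 2
      ≤ ∑ σ : V → Fin s, #{f ∈ E | ∀ x ∈ f, σ x.1 = x.2} * s ^ 2 :=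
        sum_le_sum fun σ _ => Nat.mul_le_mul_right _ (card_pullbackEdges_le σ)
    _ = ∑ f ∈ E, #{σ : V → Fin s | ∀ x ∈ f, σ x.1 = x.2} * s ^ 2 := by
        rw [← sum_mul, ← sum_mul]
        exact congrArg (· * s ^ 2) (sum_card_bipartiteAbove_eq_sum_card_bipartiteBelow _)
    _ = ∑ _f ∈ E, s ^ Fintype.card V :=
        sum_congr rfl fun f hf => card_filter_forall_mem_apply_fst_eq_snd_mul (hE hf)
    _ = ∑ _σ : V → Fin s, #E := by simp [mul_comm]

theorem exists_cliqueFree_deleteEdges_card_mul_le {k : ℕ} (hs : 0 < s)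
    (hE : ((graphBlowup H s).deleteEdges ↑E).CliqueFree k) :
    ∃ E₀ : Finset (Sym2 V), (H.deleteEdges ↑E₀).CliqueFree k ∧ #E₀ * s ^ 2 ≤ #E := by
  set E' := {f ∈ E | f ∈ (graphBlowup H s).edgeSet}
  have hE' : (graphBlowup H s).deleteEdges ↑E' = (graphBlowup H s).deleteEdges ↑E := by
    rw [deleteEdges_eq_inter_edgeSet (E : Set (Sym2 (V × Fin s))), coe_filter]
    rfl
  have : Nonempty (Fin s) := ⟨⟨0, hs⟩⟩
  obtain ⟨σ, -, hσ⟩ := exists_le_of_sum_le univ_nonempty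
    (sum_card_pullbackEdges_mul_le (E := E') fun f hf => (mem_filter.1 hf).2)
  exact ⟨_, cliqueFree_deleteEdges_pullbackEdges σ (hE' ▸ hE), hσ.trans (card_filter_le _ _)⟩

end Blowup

theorem blowup_preserves_removal_general (n₀ s : ℕ) (hs : 1 ≤ s) (ε δ : ℝ)
    {V₀ : Type*} [Fintype V₀] [DecidableEq V₀]
    (H₀ : SimpleGraph V₀) [DecidableRel H₀.Adj]
    (htri : ((H₀.cliqueFinset 3).card : ℝ) < δ * (n₀ : ℝ) ^ 3)
    (hdel : ∀ E : Finset (Sym2 V₀),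
      (H₀.deleteEdges ↑E).CliqueFree 3 → ε * (n₀ : ℝ) ^ 2 ≤ E.card) :
    (((graphBlowup H₀ s).cliqueFinset 3).card : ℝ) < δ * ((s * n₀ : ℕ) : ℝ) ^ 3 ∧
      ∀ E : Finset (Sym2 (V₀ × Fin s)),
        ((graphBlowup H₀ s).deleteEdges ↑E).CliqueFree 3 →
          ε * ((s * n₀ : ℕ) : ℝ) ^ 2 ≤ E.card := by
  have hs_pos : (0 : ℝ) < s := by exact_mod_cast hs
  refine ⟨?_, fun E hE => ?_⟩
  · calc (((graphBlowup H₀ s).cliqueFinset 3).card : ℝ)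
        ≤ (H₀.cliqueFinset 3).card * (s : ℝ) ^ 3 := by
          exact_mod_cast card_cliqueFinset_graphBlowup_le 3
      _ < δ * (n₀ : ℝ) ^ 3 * (s : ℝ) ^ 3 := by gcongr
      _ = δ * ((s * n₀ : ℕ) : ℝ) ^ 3 := by push_cast; ring
  · obtain ⟨E₀, hfree, hcard⟩ := exists_cliqueFree_deleteEdges_card_mul_le hs hE
    calc ε * ((s * n₀ : ℕ) : ℝ) ^ 2 = ε * (n₀ : ℝ) ^ 2 * (s : ℝ) ^ 2 := by push_cast; ring
      _ ≤ E₀.card * (s : ℝ) ^ 2 := by gcongr; exact hdel E₀ hfree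
      _ ≤ E.card := by exact_mod_cast hcard

theorem blowup_preserves_removal (n₀ s : ℕ) (hs : 1 ≤ s) (ε δ : ℝ)
    {V₀ : Type*} [Fintype V₀] [DecidableEq V₀]
    (H₀ : SimpleGraph V₀) [DecidableRel H₀.Adj] (hcard : Fintype.card V₀ = n₀)
    (htri : ((H₀.cliqueFinset 3).card : ℝ) < δ * (n₀ : ℝ) ^ 3)
    (hdel : ∀ E : Finset (Sym2 V₀),
      (H₀.deleteEdges ↑E).CliqueFree 3 → ε * (n₀ : ℝ) ^ 2 ≤ E.card) :
    (((graphBlowup H₀ s).cliqueFinset 3).card : ℝ) < δ * ((s * n₀ : ℕ) : ℝ) ^ 3 ∧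
      ∀ E : Finset (Sym2 (V₀ × Fin s)),
        ((graphBlowup H₀ s).deleteEdges ↑E).CliqueFree 3 →
          ε * ((s * n₀ : ℕ) : ℝ) ^ 2 ≤ E.card :=
  blowup_preserves_removal_general n₀ s hs ε δ H₀ htri hdel
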